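/- Let q be a power of an odd prime and let G = 1 + 𝔤 be a pattern subgroup of UT_n(F_{q^k}), regarded over F_q, with † an involutive F_q-algebra antiautomorphism of 𝔤 satisfying (α e_ij)† ∈ F_{q^k}^× e_{j̄ ī} for all α ∈ F_{q^k}^×. Let 𝔥 = {x ∈ 𝔤 | x_ij = 0 if j ≤ n/2} and H = 1 + 𝔥. For λ ∈ 𝔤*, set 𝔩_λ = {x ∈ 𝔤 | λ(yx) = 0 for all y ∈ 𝔥}. Then the orbit Hλ = {hλ | h ∈ H}, where (hλ)(x) = λ(h⁻¹x), equals {μ ∈ 𝔤* | μ(x) = λ(x) for all x ∈ 𝔩_λ}. -/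

import Mathlib

open Matrix

section PatternGroups

variable (F : Type) [Field F] (E : Type) [Field E] [Algebra F E] {n : ℕ}

/-- The pattern subalgebra `𝔤 ⊆ 𝔲𝔱_n(E)` of matrices supported on the set `S` of strict
relations `i ≺ j` of a subposet of the usual linear order on `[n]`. -/
def patAlg (S : Set (Fin n × Fin n)) : Set (Matrix (Fin n) (Fin n) E) :=
  {x | ∀ i j : Fin n, (i, j) ∉ S → x i j = 0}

/-- The pattern subgroup `G = 1 + 𝔤`. -/
def patGrp (S : Set (Fin n × Fin n)) : Set (Matrix (Fin n) (Fin n) E) :=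
  {g | ∃ x ∈ patAlg E S, g = 1 + x}

/-- The two-sided ideal `𝔥 = {x ∈ 𝔤 | x_{ij} = 0 if j ≤ n/2}` (indices read 1-based). -/
def patHAlg (S : Set (Fin n × Fin n)) : Set (Matrix (Fin n) (Fin n) E) :=
  {x | x ∈ patAlg E S ∧ ∀ i j : Fin n, (j : ℕ) + 1 ≤ n / 2 → x i j = 0}

/-- The normal subgroup `H = 1 + 𝔥` of `G`. -/
def patHGrp (S : Set (Fin n × Fin n)) : Set (Matrix (Fin n) (Fin n) E) :=
  {g | ∃ x ∈ patHAlg E S, g = 1 + x}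

/-- The extension of `†` from `𝔤` to `G = 1 + 𝔤`: `(1+x)† = 1 + x†`. -/
def dagGrp (dag : Matrix (Fin n) (Fin n) E → Matrix (Fin n) (Fin n) E)
    (g : Matrix (Fin n) (Fin n) E) : Matrix (Fin n) (Fin n) E :=
  1 + dag (g - 1)

/-- The subgroup `U = {u ∈ G | u† = u⁻¹}` of the pattern group `G`. -/
def patUGrp (S : Set (Fin n × Fin n))
    (dag : Matrix (Fin n) (Fin n) E → Matrix (Fin n) (Fin n) E) :
    Set (Matrix (Fin n) (Fin n) E) :=
  {u | u ∈ patGrp E S ∧ u * dagGrp E dag u = 1 ∧ dagGrp E dag u * u = 1}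

/-- The set `𝔲 = {x ∈ 𝔤 | x† = -x}`. -/
def patUAlg (S : Set (Fin n × Fin n))
    (dag : Matrix (Fin n) (Fin n) E → Matrix (Fin n) (Fin n) E) :
    Set (Matrix (Fin n) (Fin n) E) :=
  {x | x ∈ patAlg E S ∧ dag x = -x}

/-- `†` is an involutive `F`-algebra antiautomorphism of the pattern algebra `𝔤` sending
each `α e_{ij}` (`α ∈ E^×`) into `E^× e_{\bar j \bar i}`, where `\bar i = n + 1 - i`. -/
structure IsPatternAntiInvolution (S : Set (Fin n × Fin n))
    (dag : Matrix (Fin n) (Fin n) E → Matrix (Fin n) (Fin n) E) : Prop where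
  map_mem : ∀ x ∈ patAlg E S, dag x ∈ patAlg E S
  map_add : ∀ x ∈ patAlg E S, ∀ y ∈ patAlg E S, dag (x + y) = dag x + dag y
  map_smul : ∀ (c : F), ∀ x ∈ patAlg E S,
    dag (algebraMap F E c • x) = algebraMap F E c • dag x
  map_mul : ∀ x ∈ patAlg E S, ∀ y ∈ patAlg E S, dag (x * y) = dag y * dag x
  invol : ∀ x ∈ patAlg E S, dag (dag x) = x
  elementary : ∀ i j : Fin n, (i, j) ∈ S → ∀ α : E, α ≠ 0 →
    ∃ β : E, β ≠ 0 ∧ dag (Matrix.single i j α) = Matrix.single j.rev i.rev β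

/-- A Springer morphism: a bijection `f : G → 𝔤` with `f(U) = 𝔲` and
`f(1+x) = x + Σ_{i ≥ 2} a_i x^i` with coefficients `a_i ∈ F`. -/
def IsSpringerMorphism (S : Set (Fin n × Fin n))
    (dag f : Matrix (Fin n) (Fin n) E → Matrix (Fin n) (Fin n) E) : Prop :=
  Set.BijOn f (patGrp E S) (patAlg E S) ∧
  f '' patUGrp E S dag = patUAlg E S dag ∧
  ∃ (N : ℕ) (a : ℕ → F), a 1 = 1 ∧
    ∀ x ∈ patAlg E S, f (1 + x) = ∑ i ∈ Finset.Ico 1 N, algebraMap F E (a i) • x ^ i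

/-- The orbit `G · w = {g w g† | g ∈ G}` of `w` under the action `g · x = g x g†`. -/
def patGrpDot (S : Set (Fin n × Fin n))
    (dag : Matrix (Fin n) (Fin n) E → Matrix (Fin n) (Fin n) E)
    (w : Matrix (Fin n) (Fin n) E) : Set (Matrix (Fin n) (Fin n) E) :=
  {z | ∃ g ∈ patGrp E S, z = g * w * dagGrp E dag g}

end PatternGroups

section Supercharacters

variable (F : Type) [Field F] (E : Type) [Field E] [Algebra F E] {n : ℕ}

/-- The orbit of `λ ∈ 𝔲*` under a subset `T ⊆ G` (for `T = G` or `T = H`), acting by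
`(g·λ)(x) = λ(g⁻¹ · x) = λ(g⁻¹ x (g⁻¹)†)`.  An element `λ ∈ 𝔲*` is recorded as a function
`𝔲 → F` (here represented via a functional `lam` on the full matrix space: only its values
on `𝔲` matter). -/
def patDualOrbit (S : Set (Fin n × Fin n))
    (dag : Matrix (Fin n) (Fin n) E → Matrix (Fin n) (Fin n) E)
    (T : Set (Matrix (Fin n) (Fin n) E))
    (lam : Module.Dual F (Matrix (Fin n) (Fin n) E)) :
    Set (↥(patUAlg E S dag) → F) :=
  {ψ | ∃ g ∈ T, ∀ x : ↥(patUAlg E S dag),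
    ψ x = lam (g⁻¹ * (x : Matrix (Fin n) (Fin n) E) * dagGrp E dag g⁻¹)}

/-- The supercharacter `χ_λ = (|H·λ|/|G·λ|) Σ_{μ ∈ G·λ} θ ∘ μ ∘ f` of `U`, for `λ ∈ 𝔲*`. -/
noncomputable def patSupchar (S : Set (Fin n × Fin n))
    (dag f : Matrix (Fin n) (Fin n) E → Matrix (Fin n) (Fin n) E)
    (θ : AddChar F ℂ) (lam : Module.Dual F (Matrix (Fin n) (Fin n) E))
    (u : Matrix (Fin n) (Fin n) E) : ℂ :=
  (Nat.card (patDualOrbit F E S dag (patHGrp E S) lam) : ℂ) /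
    (Nat.card (patDualOrbit F E S dag (patGrp E S) lam) : ℂ) *
    ∑ᶠ ψ ∈ patDualOrbit F E S dag (patGrp E S) lam,
      @dite ℂ (f u ∈ patUAlg E S dag) (Classical.propDecidable _)
        (fun h => θ (ψ ⟨f u, h⟩)) (fun _ => 0)

/-- The superclass `K_u = {v ∈ U | f(v) ∈ G · f(u)}` of `u`, as a subset of the ambient
matrix space. -/
def patSupclass (S : Set (Fin n × Fin n))
    (dag f : Matrix (Fin n) (Fin n) E → Matrix (Fin n) (Fin n) E)
    (u : Matrix (Fin n) (Fin n) E) : Set (Matrix (Fin n) (Fin n) E) :=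
  {v | v ∈ patUGrp E S dag ∧ f v ∈ patGrpDot E S dag (f u)}

end Supercharacters

/-!
Every `h ∈ H` has `h⁻¹ = 1 + w` with `w ∈ 𝔥`, because `𝔥` is a nilpotent non-unital subalgebra;
hence `hλ = λ + λ(w ·)` and `Hλ = λ + {λ(w ·) | w ∈ 𝔥}` on `𝔤`. Now `𝔩_λ` is exactly the common
kernel on `𝔤` of the functionals `λ(w ·)`, and in finite dimension a functional vanishing on a
common kernel is a combination of the functionals, i.e. of the form `λ(w ·)` since `w ↦ λ(w ·)`
is linear.
-/

open Module

theorem Matrix.IsUpperTriangular.isNilpotent_of_diag_eq_zero {m R : Type*} [Fintype m]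
    [DecidableEq m] [LinearOrder m] [CommRing R] {M : Matrix m m R} (hM : M.IsUpperTriangular)
    (hdiag : ∀ i, M i i = 0) : IsNilpotent M := by
  refine ⟨Fintype.card m, ?_⟩
  simpa [charpoly_of_isUpperTriangular M hM, hdiag] using aeval_self_charpoly M

theorem exists_mem_one_add_mul_eq_one_of_isNilpotent {R σ : Type*} [Ring R] [SetLike σ R]
    [NonUnitalSubringClass σ R] {I : σ} {y : R} (hy : y ∈ I) (hnil : IsNilpotent y) :
    ∃ w ∈ I, (1 + y) * (1 + w) = 1 ∧ (1 + w) * (1 + y) = 1 := by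
  obtain ⟨N, hN⟩ := hnil
  have hpow : ∀ k : ℕ, (-y) ^ (k + 1) ∈ I := by
    intro k
    induction k with
    | zero => simpa using neg_mem hy
    | succ k ih => rw [pow_succ]; exact mul_mem ih (neg_mem hy)
  have hgeom : 1 + ∑ k ∈ Finset.range N, (-y) ^ (k + 1) = ∑ k ∈ Finset.range (N + 1), (-y) ^ k := by
    rw [Finset.sum_range_succ' _ N, pow_zero, add_comm]
  have hvanish : (-y) ^ (N + 1) = 0 := by rw [pow_succ, neg_pow, hN]; simp
  have hy_eq : 1 + y = 1 - -y := (sub_neg_eq_add 1 y).symm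
  refine ⟨∑ k ∈ Finset.range N, (-y) ^ (k + 1), sum_mem fun k _ => hpow k, ?_, ?_⟩
  · rw [hgeom, hy_eq, mul_neg_geom_sum, hvanish, sub_zero]
  · rw [hgeom, hy_eq, geom_sum_mul_neg, hvanish, sub_zero]

theorem LinearMap.mem_range_of_iInf_ker_le_ker {K V U : Type*} [Field K] [AddCommGroup V]
    [Module K V] [FiniteDimensional K V] [AddCommGroup U] [Module K U]
    (T : U →ₗ[K] Dual K V) {φ : Dual K V} (h : ⨅ u, ker (T u) ≤ ker φ) : φ ∈ range T := by
  simpa [← LinearMap.coe_range, Submodule.span_eq] using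
    FiniteDimensional.mem_span_of_iInf_ker_le_ker h

theorem exists_mem_forall_apply_eq_apply_one_add_mul {K A : Type*} [Field K] [Ring A]
    [Algebra K A] (𝔤 𝔥 : Submodule K A) [FiniteDimensional K 𝔤] (lam mu : Dual K A)
    (h : ∀ x ∈ 𝔤, (∀ y ∈ 𝔥, lam (y * x) = 0) → mu x = lam x) :
    ∃ z ∈ 𝔥, ∀ x ∈ 𝔤, mu x = lam ((1 + z) * x) := by
  let T : 𝔥 →ₗ[K] Dual K 𝔤 := (((LinearMap.mul K A).compr₂ lam).domRestrict 𝔥).compl₂ 𝔤.subtype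
  have hker : ⨅ z, LinearMap.ker (T z) ≤ LinearMap.ker ((mu - lam).domRestrict 𝔤) := by
    intro x hx
    simp only [Submodule.mem_iInf, LinearMap.mem_ker] at hx
    simpa [sub_eq_zero] using h x x.2 fun y hy => hx ⟨y, hy⟩
  obtain ⟨z, hz⟩ := T.mem_range_of_iInf_ker_le_ker hker
  refine ⟨z, z.2, fun x hx => ?_⟩
  have hzx : lam (z * x) = mu x - lam x := LinearMap.congr_fun hz ⟨x, hx⟩
  rw [add_mul, one_mul, map_add, hzx, add_sub_cancel]

section PatternAlgebra

variable {E : Type} [Field E] {n : ℕ} {S : Set (Fin n × Fin n)}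

theorem isNilpotent_of_mem_patAlg (hS1 : ∀ p ∈ S, p.1 < p.2) {x : Matrix (Fin n) (Fin n) E}
    (hx : x ∈ patAlg E S) : IsNilpotent x :=
  Matrix.IsUpperTriangular.isNilpotent_of_diag_eq_zero
    (fun i j hji => hx i j fun hij => (hS1 _ hij).asymm hji)
    (fun i => hx i i fun hii => (hS1 _ hii).false)

theorem mul_mem_patAlg (hS2 : ∀ i j k : Fin n, (i, j) ∈ S → (j, k) ∈ S → (i, k) ∈ S)
    {x y : Matrix (Fin n) (Fin n) E} (hx : x ∈ patAlg E S) (hy : y ∈ patAlg E S) :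
    x * y ∈ patAlg E S := by
  intro i k hik
  rw [Matrix.mul_apply]
  refine Finset.sum_eq_zero fun j _ => ?_
  by_cases hij : (i, j) ∈ S
  · rw [hy j k fun hjk => hik (hS2 i j k hij hjk), mul_zero]
  · rw [hx i j hij, zero_mul]

theorem mul_mem_patHAlg (hS2 : ∀ i j k : Fin n, (i, j) ∈ S → (j, k) ∈ S → (i, k) ∈ S)
    {x y : Matrix (Fin n) (Fin n) E} (hx : x ∈ patAlg E S) (hy : y ∈ patHAlg E S) :
    x * y ∈ patHAlg E S :=
  ⟨mul_mem_patAlg hS2 hx hy.1, fun i k hk => by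
    rw [Matrix.mul_apply]
    exact Finset.sum_eq_zero fun j _ => by rw [hy.2 j k hk, mul_zero]⟩

end PatternAlgebra

section PatternSubalgebras

variable (F : Type) [Field F] (E : Type) [Field E] [Algebra F E] {n : ℕ} (S : Set (Fin n × Fin n))

def patAlgSubmodule : Submodule F (Matrix (Fin n) (Fin n) E) where
  carrier := patAlg E S
  zero_mem' _ _ _ := rfl
  add_mem' hx hy i j hij := by simp [hx i j hij, hy i j hij]
  smul_mem' c x hx i j hij := by simp [hx i j hij]

def patHAlgNonUnitalSubalgebra (hS2 : ∀ i j k : Fin n, (i, j) ∈ S → (j, k) ∈ S → (i, k) ∈ S) :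
    NonUnitalSubalgebra F (Matrix (Fin n) (Fin n) E) where
  carrier := patHAlg E S
  zero_mem' := ⟨fun _ _ _ => rfl, fun _ _ _ => rfl⟩
  add_mem' hx hy := ⟨fun i j hij => by simp [hx.1 i j hij, hy.1 i j hij],
    fun i j hj => by simp [hx.2 i j hj, hy.2 i j hj]⟩
  smul_mem' c x hx := ⟨fun i j hij => by simp [hx.1 i j hij], fun i j hj => by simp [hx.2 i j hj]⟩
  mul_mem' hx hy := mul_mem_patHAlg hS2 hx.1 hy

end PatternSubalgebras

theorem exists_inv_eq_one_add_of_mem_patHAlg {E : Type} [Field E] {n : ℕ}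
    {S : Set (Fin n × Fin n)} (hS1 : ∀ p ∈ S, p.1 < p.2)
    (hS2 : ∀ i j k : Fin n, (i, j) ∈ S → (j, k) ∈ S → (i, k) ∈ S)
    {y : Matrix (Fin n) (Fin n) E} (hy : y ∈ patHAlg E S) :
    ∃ w ∈ patHAlg E S, (1 + y)⁻¹ = 1 + w ∧ (1 + w)⁻¹ = 1 + y := by
  obtain ⟨w, hw, hyw, hwy⟩ := exists_mem_one_add_mul_eq_one_of_isNilpotent
    (I := patHAlgNonUnitalSubalgebra E E S hS2) hy (isNilpotent_of_mem_patAlg hS1 hy.1)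
  exact ⟨w, hw, Matrix.inv_eq_right_inv hyw, Matrix.inv_eq_right_inv hwy⟩

theorem H_orbit_eq_functionals_agreeing_on_left_ideal_general
    (F : Type) [Field F] (E : Type) [Field E] [Fintype E] [Algebra F E]
    {n : ℕ} (S : Set (Fin n × Fin n))
    (hS1 : ∀ p ∈ S, p.1 < p.2)
    (hS2 : ∀ i j k : Fin n, (i, j) ∈ S → (j, k) ∈ S → (i, k) ∈ S)
    (lam : Module.Dual F (Matrix (Fin n) (Fin n) E)) :
    {ψ : ↥(patAlg E S) → F | ∃ h ∈ patHGrp E S,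
        ∀ x : ↥(patAlg E S), ψ x = lam (h⁻¹ * (x : Matrix (Fin n) (Fin n) E))} =
      {ψ : ↥(patAlg E S) → F | ∃ mu : Module.Dual F (Matrix (Fin n) (Fin n) E),
        (∀ x : ↥(patAlg E S), ψ x = mu (x : Matrix (Fin n) (Fin n) E)) ∧
        ∀ x ∈ patAlg E S, (∀ y ∈ patHAlg E S, lam (y * x) = 0) → mu x = lam x} := by
  ext ψ
  constructor
  · rintro ⟨_, ⟨y, hy, rfl⟩, hψ⟩
    obtain ⟨w, hw, hinv, -⟩ := exists_inv_eq_one_add_of_mem_patHAlg hS1 hS2 hy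
    refine ⟨lam.comp (LinearMap.mulLeft F (1 + w)), fun x => by simp [hψ x, hinv],
      fun x _ hx => ?_⟩
    simp [add_mul, hx w hw]
  · rintro ⟨mu, hψ, hagree⟩
    obtain ⟨z, hz, hmu⟩ := exists_mem_forall_apply_eq_apply_one_add_mul
      (patAlgSubmodule F E S) (patHAlgNonUnitalSubalgebra F E S hS2).toSubmodule lam mu hagree
    obtain ⟨w, hw, -, hinv⟩ := exists_inv_eq_one_add_of_mem_patHAlg hS1 hS2 hz
    exact ⟨1 + w, ⟨w, hw, rfl⟩, fun x => by rw [hψ x, hinv, hmu x x.2]⟩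

/-- With `G = 1 + 𝔤` a pattern subgroup, `†` an anti-involution as above,
`𝔥 = {x ∈ 𝔤 | x_ij = 0 if j ≤ n/2}` and `H = 1 + 𝔥`: for `λ ∈ 𝔤*` (represented by a
functional `lam` on the full matrix space, with elements of `𝔤*` recorded as functions
`𝔤 → F`) and `𝔩_λ = {x ∈ 𝔤 | λ(yx) = 0 for all y ∈ 𝔥}`, the orbit
`Hλ = {hλ | h ∈ H}`, where `(hλ)(x) = λ(h⁻¹x)`, equals
`{μ ∈ 𝔤* | μ(x) = λ(x) for all x ∈ 𝔩_λ}`. -/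
theorem H_orbit_eq_functionals_agreeing_on_left_ideal
    (F : Type) [Field F] [Fintype F] (E : Type) [Field E] [Fintype E] [Algebra F E]
    (hodd : ringChar F ≠ 2)
    {n : ℕ} (S : Set (Fin n × Fin n))
    (hS1 : ∀ p ∈ S, p.1 < p.2)
    (hS2 : ∀ i j k : Fin n, (i, j) ∈ S → (j, k) ∈ S → (i, k) ∈ S)
    (dag : Matrix (Fin n) (Fin n) E → Matrix (Fin n) (Fin n) E)
    (hdag : IsPatternAntiInvolution F E S dag)
    (lam : Module.Dual F (Matrix (Fin n) (Fin n) E)) :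
    {ψ : ↥(patAlg E S) → F | ∃ h ∈ patHGrp E S,
        ∀ x : ↥(patAlg E S), ψ x = lam (h⁻¹ * (x : Matrix (Fin n) (Fin n) E))} =
      {ψ : ↥(patAlg E S) → F | ∃ mu : Module.Dual F (Matrix (Fin n) (Fin n) E),
        (∀ x : ↥(patAlg E S), ψ x = mu (x : Matrix (Fin n) (Fin n) E)) ∧
        ∀ x ∈ patAlg E S, (∀ y ∈ patHAlg E S, lam (y * x) = 0) → mu x = lam x} :=
  H_orbit_eq_functionals_agreeing_on_left_ideal_general F E S hS1 hS2 lam
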